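/- arXiv:2510.00521 — 2 statements merged into one kernel-verified Lean document; each statement's English description precedes it below -/
import Mathlib

section
/- For every set F ⊆ ℝ^d, the packing dimension, generalized upper box dimension, and Assouad dimension satisfy dim_P F ≤ \overline{dim}_GB F ≤ dim_A F. -/
open Filter Metric Set Topology Bornology ENNReal

noncomputable section

variable {X : Type*} [PseudoMetricSpace X]

/-- `coveringNumber r E` is the smallest number of closed balls of radius `r`
needed to cover `E` (with value `⊤` if no finite cover exists). -/
def coveringNumber (r : ℝ) (E : Set X) : ℕ∞ :=
  sInf {n : ℕ∞ | ∃ t : Finset X, (E ⊆ ⋃ x ∈ t, closedBall x r) ∧ (t.card : ℕ∞) = n}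

/-- The Assouad spectrum `dim_A^θ F`. -/
def assouadSpectrum (θ : ℝ) (F : Set X) : ℝ :=
  sInf {s : ℝ | 0 ≤ s ∧ ∃ C > (0 : ℝ), ∀ R : ℝ, 0 < R → R < 1 → ∀ x ∈ F,
    (coveringNumber (R ^ (1 / θ)) (closedBall x R ∩ F) : ℝ≥0∞)
      ≤ ENNReal.ofReal (C * (R / R ^ (1 / θ)) ^ s)}

/-- The upper spectrum `\overline{dim}_A^θ F`. -/
def upperSpectrum (θ : ℝ) (F : Set X) : ℝ :=
  sInf {s : ℝ | 0 ≤ s ∧ ∃ C > (0 : ℝ), ∀ r R : ℝ, 0 < r → r ≤ R ^ (1 / θ) →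
    R ^ (1 / θ) < R → R < 1 → 0 < R → ∀ x ∈ F,
    (coveringNumber r (closedBall x R ∩ F) : ℝ≥0∞) ≤ ENNReal.ofReal (C * (R / r) ^ s)}

/-- The generalized upper box dimension `\overline{dim}_{GB} F := limsup_{θ → 0⁺} dim_A^θ F`. -/
def genUpperBoxDim (F : Set X) : ℝ :=
  limsup (fun θ : ℝ => assouadSpectrum θ F) (𝓝[>] (0 : ℝ))

/-- The quasi-Assouad dimension `dim_{qA} F := lim_{θ → 1⁻} \overline{dim}_A^θ F`
(the limit exists by monotonicity, hence equals the limsup). -/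
def quasiAssouadDim (F : Set X) : ℝ :=
  limsup (fun θ : ℝ => upperSpectrum θ F) (𝓝[<] (1 : ℝ))

/-- The upper box dimension `\overline{dim}_B F := limsup_{δ → 0⁺} log N_δ(F) / (- log δ)`. -/
def upperBoxDim (F : Set X) : ℝ :=
  limsup (fun δ : ℝ => Real.log ((coveringNumber δ F).toNat : ℝ) / (- Real.log δ))
    (𝓝[>] (0 : ℝ))

/-- The Assouad dimension `dim_A F`. -/
def assouadDim (F : Set X) : ℝ :=
  sInf {s : ℝ | 0 ≤ s ∧ ∃ C > (0 : ℝ), ∃ ρ > (0 : ℝ), ∀ r R : ℝ, 0 < r → r < R → R < ρ →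
    ∀ x ∈ F, (coveringNumber r (closedBall x R ∩ F) : ℝ≥0∞) ≤ ENNReal.ofReal (C * (R / r) ^ s)}

/-- The packing pre-measure at scale `δ`: the supremum of `∑ |B_i|^s` over at most countable
collections of disjoint closed balls of radii at most `δ` (and positive) with centres in `F`,
where `|B_i| = 2 r_i` is the diameter. -/
def packingPre (s δ : ℝ) (F : Set X) : ℝ≥0∞ :=
  ⨆ (D : Set (X × ℝ)) (_ : D.Countable)
    (_ : ∀ p ∈ D, p.1 ∈ F ∧ 0 < p.2 ∧ p.2 ≤ δ)
    (_ : D.Pairwise fun p q => Disjoint (closedBall p.1 p.2) (closedBall q.1 q.2)),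
    ∑' p : D, ENNReal.ofReal ((2 * (p : X × ℝ).2) ^ s)

/-- `𝒫₀^s(F) := lim_{δ → 0} 𝒫_δ^s(F)`; the limit exists by monotonicity and equals the inf. -/
def packingPre₀ (s : ℝ) (F : Set X) : ℝ≥0∞ :=
  ⨅ (δ : ℝ) (_ : 0 < δ), packingPre s δ F

/-- The packing (outer) measure `𝒫^s(F)`. -/
def packingMeasure (s : ℝ) (F : Set X) : ℝ≥0∞ :=
  ⨅ (G : ℕ → Set X) (_ : F ⊆ ⋃ i, G i), ∑' i, packingPre₀ s (G i)

/-- The packing dimension `dim_P F = inf {s ≥ 0 : 𝒫^s(F) = 0}`. -/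
def packingDim (F : Set X) : ℝ :=
  sInf {s : ℝ | 0 ≤ s ∧ packingMeasure s F = 0}

/-! Both inequalities rest on the doubling property of `ℝ^d`: `N_r(B(x, R)) ≤ C (R / r) ^ D` for
`r ≤ R`. It bounds every `dim_A^θ F` by `D`, so the `limsup` defining `\overline{dim}_GB F` is
that of a bounded function, and it makes the set of exponents defining `dim_A F` nonempty.

`\overline{dim}_GB F ≤ dim_A F`: in a doubling space an Assouad bound for `F` at scales below
some `ρ` extends to all scales below `1`, hence every admissible exponent for `dim_A F` is
admissible for each `dim_A^θ F`.

`dim_P F ≤ \overline{dim}_GB F`: if `s` is admissible for `dim_A^θ F`, covering `B(x₀, M)` first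
at scale `ε ^ θ` and then at scale `ε` shows that every bounded part of `F` has upper box dimension
at most `θ D + s`. Packing pre-measures vanish above the upper box dimension, and `F` is a countable
union of bounded parts, so `dim_P F ≤ dim_A^θ F + θ D`; let `θ → 0`. -/

theorem coe_coveringNumber_le_ofReal_iff {r B : ℝ} {E : Set X} (hB : 0 ≤ B) :
    (coveringNumber r E : ℝ≥0∞) ≤ ENNReal.ofReal B ↔
      ∃ t : Finset X, (E ⊆ ⋃ x ∈ t, closedBall x r) ∧ (t.card : ℝ) ≤ B := by
  constructor
  · intro h
    have hne : coveringNumber r E ≠ ⊤ := by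
      rintro htop
      simp [htop] at h
    obtain ⟨t, ht, hcard⟩ : coveringNumber r E ∈
        {n : ℕ∞ | ∃ t : Finset X, (E ⊆ ⋃ x ∈ t, closedBall x r) ∧ (t.card : ℕ∞) = n} :=
      csInf_mem (Set.nonempty_iff_ne_empty.mpr fun he => hne (by simp [_root_.coveringNumber, he]))
    refine ⟨t, ht, ?_⟩
    rwa [← hcard, ENat.toENNReal_coe, ← ENNReal.ofReal_natCast,
      ENNReal.ofReal_le_ofReal_iff hB] at h
  · rintro ⟨t, ht, hcard⟩
    have hle : coveringNumber r E ≤ t.card := sInf_le ⟨t, ht, rfl⟩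
    calc (coveringNumber r E : ℝ≥0∞) ≤ ((t.card : ℕ∞) : ℝ≥0∞) := by exact_mod_cast hle
      _ = ENNReal.ofReal t.card := by rw [ENat.toENNReal_coe, ENNReal.ofReal_natCast]
      _ ≤ ENNReal.ofReal B := ENNReal.ofReal_le_ofReal hcard

theorem coveringNumber_mono {r : ℝ} {E E' : Set X} (h : E' ⊆ E) :
    coveringNumber r E' ≤ coveringNumber r E :=
  le_sInf fun _ ⟨t, ht, htcard⟩ => sInf_le ⟨t, h.trans ht, htcard⟩

theorem coe_coveringNumber_le_ofReal_one_of_subset {r : ℝ} {E : Set X} {x : X}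
    (h : E ⊆ closedBall x r) : (coveringNumber r E : ℝ≥0∞) ≤ ENNReal.ofReal 1 :=
  (coe_coveringNumber_le_ofReal_iff zero_le_one).mpr ⟨{x}, by simpa using h, by simp⟩

theorem coveringNumber_inter_le_mul {T F : Set X} {ρ r a m : ℝ} (ha : 0 ≤ a) (hm : 0 ≤ m)
    (hT : (coveringNumber ρ T : ℝ≥0∞) ≤ ENNReal.ofReal a)
    (hF : ∀ z ∈ F, (coveringNumber r (closedBall z (2 * ρ) ∩ F) : ℝ≥0∞) ≤ ENNReal.ofReal m) :
    (coveringNumber r (T ∩ F) : ℝ≥0∞) ≤ ENNReal.ofReal (a * m) := by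
  classical
  obtain ⟨u, hu, hucard⟩ := (coe_coveringNumber_le_ofReal_iff ha).mp hT
  have hpiece : ∀ y : X, ∃ t : Finset X,
      (closedBall y ρ ∩ F ⊆ ⋃ w ∈ t, closedBall w r) ∧ (t.card : ℝ) ≤ m := by
    intro y
    rcases (closedBall y ρ ∩ F).eq_empty_or_nonempty with hempty | ⟨z, hzy, hzF⟩
    · exact ⟨∅, by simp [hempty], by simpa using hm⟩
    obtain ⟨t, ht, htcard⟩ := (coe_coveringNumber_le_ofReal_iff hm).mp (hF z hzF)
    refine ⟨t, fun w hw => ht ⟨?_, hw.2⟩, htcard⟩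
    calc dist w z ≤ dist w y + dist z y := dist_triangle_right _ _ _
      _ ≤ 2 * ρ := by linarith [mem_closedBall.mp hw.1, mem_closedBall.mp hzy]
  choose g hg hgcard using hpiece
  refine (coe_coveringNumber_le_ofReal_iff (mul_nonneg ha hm)).mpr ⟨u.biUnion g, ?_, ?_⟩
  · rintro w ⟨hwT, hwF⟩
    obtain ⟨y, hy, hwy⟩ := mem_iUnion₂.mp (hu hwT)
    obtain ⟨v, hv, hwv⟩ := mem_iUnion₂.mp (hg y ⟨hwy, hwF⟩)
    exact mem_iUnion₂.mpr ⟨v, Finset.mem_biUnion.mpr ⟨y, hy, hv⟩, hwv⟩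
  · calc ((u.biUnion g).card : ℝ) ≤ ∑ y ∈ u, ((g y).card : ℝ) := by
          exact_mod_cast Finset.card_biUnion_le
      _ ≤ ∑ _y ∈ u, m := Finset.sum_le_sum fun y _ => hgcard y
      _ = u.card * m := by rw [Finset.sum_const, nsmul_eq_mul]
      _ ≤ a * m := mul_le_mul_of_nonneg_right hucard hm

theorem card_le_coveringNumber_of_pairwise_disjoint {G : Set X} {ε : ℝ} {S : Finset (X × ℝ)}
    (hS : ∀ p ∈ S, p.1 ∈ G ∧ ε ≤ p.2)
    (hdisj : (S : Set (X × ℝ)).Pairwise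
      fun p q => Disjoint (closedBall p.1 p.2) (closedBall q.1 q.2)) :
    (S.card : ℕ∞) ≤ coveringNumber ε G := by
  refine le_sInf ?_
  rintro _ ⟨t, ht, rfl⟩
  obtain rfl | ⟨⟨x, -⟩, -⟩ := S.eq_empty_or_nonempty
  · simp
  have : Nonempty X := ⟨x⟩
  have hcentre : ∀ p ∈ S, ∃ w ∈ t, p.1 ∈ closedBall w ε := fun p hp => by
    simpa only [exists_prop] using mem_iUnion₂.mp (ht (hS p hp).1)
  choose! f hft hf using hcentre
  have hmem : ∀ p ∈ S, f p ∈ closedBall p.1 p.2 := fun p hp =>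
    closedBall_subset_closedBall (hS p hp).2 (mem_closedBall_comm.mp (hf p hp))
  refine Nat.cast_le.mpr (Finset.card_le_card_of_injOn f hft fun p hp q hq hpq => ?_)
  by_contra hne
  exact Set.disjoint_left.mp (hdisj hp hq hne) (hmem p hp) (hpq ▸ hmem q hq)

theorem sum_rpow_le_of_coveringNumber_le {G : Set X} {ε δ s N : ℝ} (hε : 0 ≤ ε) (hεδ : ε ≤ δ)
    (hs : 0 ≤ s) (hN : 0 ≤ N) (hG : (coveringNumber ε G : ℝ≥0∞) ≤ ENNReal.ofReal N)
    {S : Finset (X × ℝ)} (hS : ∀ p ∈ S, p.1 ∈ G ∧ p.2 ∈ Icc ε δ)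
    (hdisj : (S : Set (X × ℝ)).Pairwise
      fun p q => Disjoint (closedBall p.1 p.2) (closedBall q.1 q.2)) :
    ∑ p ∈ S, (2 * p.2) ^ s ≤ N * (2 * δ) ^ s := by
  have hcard : (S.card : ℝ) ≤ N := by
    have h := (ENat.toENNReal_le.mpr (card_le_coveringNumber_of_pairwise_disjoint
      (fun p hp => ⟨(hS p hp).1, (hS p hp).2.1⟩) hdisj)).trans hG
    rwa [ENat.toENNReal_coe, ← ENNReal.ofReal_natCast, ENNReal.ofReal_le_ofReal_iff hN] at h
  calc ∑ p ∈ S, (2 * p.2) ^ s ≤ ∑ _p ∈ S, (2 * δ) ^ s := Finset.sum_le_sum fun p hp => by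
        obtain ⟨-, hεp, hpδ⟩ := hS p hp
        gcongr
        linarith
    _ = S.card * (2 * δ) ^ s := by rw [Finset.sum_const, nsmul_eq_mul]
    _ ≤ N * (2 * δ) ^ s :=
        mul_le_mul_of_nonneg_right hcard (Real.rpow_nonneg (by linarith) _)

theorem half_pow_succ_rpow_neg_mul {A t s : ℝ} (k : ℕ) :
    A * (((1 : ℝ) / 2) ^ (k + 1)) ^ (-t) * (2 * (1 / 2) ^ k) ^ s
      = A * 2 ^ (t + s) * (((1 : ℝ) / 2) ^ (s - t)) ^ k := by
  have hu : (0 : ℝ) < (1 / 2) ^ k := by positivity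
  rw [pow_succ, Real.mul_rpow hu.le (by norm_num), Real.mul_rpow zero_le_two hu.le,
    Real.rpow_pow_comm (by norm_num), sub_eq_add_neg, Real.rpow_add hu, Real.rpow_add two_pos,
    one_div, Real.inv_rpow zero_le_two, Real.rpow_neg zero_le_two, inv_inv]
  ring

/-- A packing by balls of radius at most `2⁻ᴷ` is estimated scale by scale: the balls with radius
in `(2⁻⁽ᵏ⁺¹⁾, 2⁻ᵏ]` number at most `N_{2⁻⁽ᵏ⁺¹⁾}(G) ≲ 2^{kt}`, and the resulting series in `k` is
geometric with ratio `2^{t - s} < 1`. -/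
theorem sum_rpow_le_of_forall_coveringNumber_le {G : Set X} {A t s : ℝ} (hA : 0 ≤ A)
    (hs : 0 ≤ s) (hts : t < s)
    (hG : ∀ ε : ℝ, 0 < ε → ε < 1 → (coveringNumber ε G : ℝ≥0∞) ≤ ENNReal.ofReal (A * ε ^ (-t)))
    (K : ℕ) {S : Finset (X × ℝ)} (hS : ∀ p ∈ S, p.1 ∈ G ∧ 0 < p.2 ∧ p.2 ≤ (1 / 2) ^ K)
    (hdisj : (S : Set (X × ℝ)).Pairwise
      fun p q => Disjoint (closedBall p.1 p.2) (closedBall q.1 q.2)) :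
    ∑ p ∈ S, (2 * p.2) ^ s
      ≤ A * 2 ^ (t + s) * ((1 / 2) ^ (s - t)) ^ K / (1 - (1 / 2) ^ (s - t)) := by
  set q : ℝ := (1 / 2) ^ (s - t)
  have hq0 : 0 ≤ q := by positivity
  have hq1 : q < 1 := Real.rpow_lt_one (by norm_num) (by norm_num) (sub_pos.mpr hts)
  have hscale : ∀ p ∈ S, ∃ k : ℕ, (1 / 2 : ℝ) ^ (k + 1) < p.2 ∧ p.2 ≤ (1 / 2) ^ k := fun p hp =>
    exists_nat_pow_near_of_lt_one (hS p hp).2.1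
      ((hS p hp).2.2.trans (pow_le_one₀ (by norm_num) (by norm_num))) (by norm_num) (by norm_num)
  choose! k hk using hscale
  have hmaps : ∀ p ∈ S, k p ∈ Finset.Ico K (S.sup k + 1) := fun p hp => by
    refine Finset.mem_Ico.mpr ⟨?_, Nat.lt_succ_of_le (Finset.le_sup hp)⟩
    have h := (hk p hp).1.trans_le (hS p hp).2.2
    rw [pow_lt_pow_iff_right_of_lt_one₀ (by norm_num) (by norm_num)] at h
    omega
  have hfiber : ∀ j : ℕ, ∑ p ∈ S with k p = j, (2 * p.2) ^ s ≤ A * 2 ^ (t + s) * q ^ j := by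
    intro j
    rw [← half_pow_succ_rpow_neg_mul]
    refine sum_rpow_le_of_coveringNumber_le (by positivity) (pow_le_pow_of_le_one (by norm_num)
      (by norm_num) j.le_succ) hs (by positivity) (hG _ (by positivity)
      (pow_lt_one₀ (by norm_num) (by norm_num) j.succ_ne_zero)) (fun p hp => ?_)
      (hdisj.mono (Finset.coe_subset.mpr (Finset.filter_subset _ _)))
    obtain ⟨hpS, rfl⟩ := Finset.mem_filter.mp hp
    exact ⟨(hS p hpS).1, (hk p hpS).1.le, (hk p hpS).2⟩
  calc ∑ p ∈ S, (2 * p.2) ^ s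
      = ∑ j ∈ Finset.Ico K (S.sup k + 1), ∑ p ∈ S with k p = j, (2 * p.2) ^ s :=
        (Finset.sum_fiberwise_of_maps_to hmaps _).symm
    _ ≤ ∑ j ∈ Finset.Ico K (S.sup k + 1), A * 2 ^ (t + s) * q ^ j :=
        Finset.sum_le_sum fun j _ => hfiber j
    _ ≤ A * 2 ^ (t + s) * (q ^ K / (1 - q)) := by
        rw [← Finset.mul_sum]
        exact mul_le_mul_of_nonneg_left (geom_sum_Ico_le_of_lt_one hq0 hq1) (by positivity)
    _ = A * 2 ^ (t + s) * q ^ K / (1 - q) := by ring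

theorem packingPre_half_pow_le {G : Set X} {A t s : ℝ} (hA : 0 ≤ A) (hs : 0 ≤ s) (hts : t < s)
    (hG : ∀ ε : ℝ, 0 < ε → ε < 1 →
      (coveringNumber ε G : ℝ≥0∞) ≤ ENNReal.ofReal (A * ε ^ (-t))) (K : ℕ) :
    packingPre s ((1 / 2) ^ K) G
      ≤ ENNReal.ofReal (A * 2 ^ (t + s) * ((1 / 2) ^ (s - t)) ^ K / (1 - (1 / 2) ^ (s - t))) := by
  refine iSup₂_le fun D _ => iSup₂_le fun hD hdisj => ?_
  rw [ENNReal.tsum_eq_iSup_sum]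
  refine iSup_le fun u => ?_
  rw [← ENNReal.ofReal_sum_of_nonneg fun p _ => Real.rpow_nonneg (by linarith [(hD p p.2).2.1]) _]
  refine ENNReal.ofReal_le_ofReal ((Finset.sum_map u (Function.Embedding.subtype _)
    fun p => (2 * p.2) ^ s).ge.trans (sum_rpow_le_of_forall_coveringNumber_le hA hs hts hG K ?_ ?_))
  · intro p hp
    obtain ⟨p, -, rfl⟩ := Finset.mem_map.mp hp
    exact hD p p.2
  · refine hdisj.mono fun p hp => ?_
    obtain ⟨p, -, rfl⟩ := Finset.mem_map.mp hp
    exact p.2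

theorem packingPre₀_eq_zero_of_forall_coveringNumber_le {G : Set X} {A t s : ℝ} (hA : 0 ≤ A)
    (hs : 0 ≤ s) (hts : t < s)
    (hG : ∀ ε : ℝ, 0 < ε → ε < 1 →
      (coveringNumber ε G : ℝ≥0∞) ≤ ENNReal.ofReal (A * ε ^ (-t))) :
    packingPre₀ s G = 0 := by
  set q : ℝ := (1 / 2) ^ (s - t)
  have hq1 : q < 1 := Real.rpow_lt_one (by norm_num) (by norm_num) (sub_pos.mpr hts)
  have hlim : Tendsto (fun K : ℕ => ENNReal.ofReal (A * 2 ^ (t + s) * q ^ K / (1 - q)))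
      atTop (𝓝 0) := by
    rw [← ENNReal.ofReal_zero]
    refine ENNReal.tendsto_ofReal ?_
    simpa [mul_div_assoc] using ((tendsto_pow_atTop_nhds_zero_of_lt_one (by positivity)
      hq1).div_const (1 - q)).const_mul (A * 2 ^ (t + s))
  refine nonpos_iff_eq_zero.mp (ge_of_tendsto' hlim fun K => ?_)
  exact (iInf₂_le _ (by positivity)).trans (packingPre_half_pow_le hA hs hts hG K)

theorem packingMeasure_eq_zero_of_subset_iUnion {s : ℝ} {F : Set X} (G : ℕ → Set X)
    (hF : F ⊆ ⋃ i, G i) (hG : ∀ i, packingPre₀ s (G i) = 0) : packingMeasure s F = 0 :=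
  nonpos_iff_eq_zero.mp ((iInf₂_le G hF).trans (by simp [hG]))

theorem packingDim_le_of_packingMeasure_eq_zero {s : ℝ} {F : Set X} (hs : 0 ≤ s)
    (h : packingMeasure s F = 0) : packingDim F ≤ s :=
  csInf_le ⟨0, fun _ h => h.1⟩ ⟨hs, h⟩

variable (X) in
structure BallCoveringBound (C D : ℝ) : Prop where
  const_pos : 0 < C
  exponent_nonneg : 0 ≤ D
  coveringNumber_closedBall_le : ∀ (x : X) (r R : ℝ), 0 < r → r ≤ R →
    (coveringNumber r (closedBall x R) : ℝ≥0∞) ≤ ENNReal.ofReal (C * (R / r) ^ D)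

theorem exists_finset_closedBall_subset_halves {K : ℕ}
    (hK : ∀ (x : X) (ρ : ℝ), 0 < ρ →
      ∃ t : Finset X, t.card ≤ K ∧ closedBall x ρ ⊆ ⋃ y ∈ t, closedBall y (ρ / 2))
    (n : ℕ) (x : X) {ρ : ℝ} (hρ : 0 < ρ) :
    ∃ t : Finset X, t.card ≤ K ^ n ∧ closedBall x ρ ⊆ ⋃ y ∈ t, closedBall y (ρ / 2 ^ n) := by
  classical
  induction n with
  | zero => exact ⟨{x}, by simp, by simp⟩
  | succ n ih =>
    obtain ⟨t, htcard, ht⟩ := ih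
    choose g hgcard hg using fun y : X => hK y (ρ / 2 ^ n) (by positivity)
    refine ⟨t.biUnion g, ?_, fun z hz => ?_⟩
    · calc (t.biUnion g).card ≤ ∑ y ∈ t, (g y).card := Finset.card_biUnion_le
        _ ≤ t.card * K := by simpa using Finset.sum_le_sum fun y _ => hgcard y
        _ ≤ K ^ (n + 1) := by rw [pow_succ]; exact Nat.mul_le_mul_right K htcard
    obtain ⟨y, hy, hzy⟩ := mem_iUnion₂.mp (ht hz)
    obtain ⟨w, hw, hzw⟩ := mem_iUnion₂.mp (hg y hzy)
    refine mem_iUnion₂.mpr ⟨w, Finset.mem_biUnion.mpr ⟨y, hy, hw⟩, ?_⟩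
    rwa [pow_succ, ← div_div]

theorem ballCoveringBound_of_halving {K : ℕ} (hK1 : 1 ≤ K)
    (hK : ∀ (x : X) (ρ : ℝ), 0 < ρ →
      ∃ t : Finset X, t.card ≤ K ∧ closedBall x ρ ⊆ ⋃ y ∈ t, closedBall y (ρ / 2)) :
    BallCoveringBound X K (Real.logb 2 K) := by
  have hK1' : (1 : ℝ) ≤ K := by exact_mod_cast hK1
  have hlogb : 0 ≤ Real.logb 2 K := Real.logb_nonneg one_lt_two hK1'
  refine ⟨by positivity, hlogb, fun x r R hr hrR => ?_⟩
  have hR : 0 < R := hr.trans_le hrR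
  obtain ⟨n, h2n, h2n'⟩ := exists_nat_pow_near ((one_le_div hr).mpr hrR) one_lt_two
  obtain ⟨t, htcard, ht⟩ := exists_finset_closedBall_subset_halves hK (n + 1) x hR
  refine (coe_coveringNumber_le_ofReal_iff (by positivity)).mpr ⟨t, ?_, ?_⟩
  · refine ht.trans (iUnion₂_mono fun y _ => closedBall_subset_closedBall ?_)
    rw [div_le_iff₀ (by positivity)]
    rw [div_lt_iff₀ hr] at h2n'
    linarith
  · calc (t.card : ℝ) ≤ K * (K : ℝ) ^ n := by rw [← pow_succ']; exact_mod_cast htcard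
      _ = K * ((2 : ℝ) ^ n) ^ Real.logb 2 K := by
        rw [← Real.rpow_pow_comm zero_le_two, Real.rpow_logb two_pos one_lt_two.ne' (by positivity)]
      _ ≤ K * (R / r) ^ Real.logb 2 K := by gcongr

theorem exists_finset_closedBall_subset [ProperSpace X] (x : X) (R : ℝ) {ε : ℝ} (hε : 0 < ε) :
    ∃ t : Finset X, closedBall x R ⊆ ⋃ y ∈ t, closedBall y ε := by
  obtain ⟨s, -, hs, hcover⟩ := (isCompact_closedBall x R).finite_cover_balls hε
  refine ⟨hs.toFinset, hcover.trans (iUnion₂_mono' fun y hy => ⟨y, hs.mem_toFinset.mpr hy, ?_⟩)⟩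
  exact ball_subset_closedBall

section NormedSpace

variable {V : Type*} [NormedAddCommGroup V] [NormedSpace ℝ V]

theorem closedBall_subset_homothety {t : Finset V} {ε : ℝ}
    (ht : closedBall (0 : V) 1 ⊆ ⋃ y ∈ t, closedBall y ε) (x : V) {ρ : ℝ} (hρ : 0 < ρ) :
    closedBall x ρ ⊆ ⋃ y ∈ t, closedBall (x + ρ • y) (ρ * ε) := by
  intro z hz
  have hw : ρ⁻¹ • (z - x) ∈ closedBall (0 : V) 1 := by
    rw [mem_closedBall_zero_iff, norm_smul, norm_inv, Real.norm_of_nonneg hρ.le,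
      inv_mul_le_iff₀ hρ, mul_one, ← dist_eq_norm]
    exact hz
  obtain ⟨y, hy, hwy⟩ := mem_iUnion₂.mp (ht hw)
  refine mem_iUnion₂.mpr ⟨y, hy, ?_⟩
  have hz : z = x + ρ • ρ⁻¹ • (z - x) := by rw [smul_inv_smul₀ hρ.ne']; abel
  rw [hz, mem_closedBall, dist_add_left, dist_smul₀, Real.norm_of_nonneg hρ.le]
  exact mul_le_mul_of_nonneg_left hwy hρ.le

theorem exists_ballCoveringBound [ProperSpace V] : ∃ C D : ℝ, BallCoveringBound V C D := by
  classical
  obtain ⟨t₀, ht₀⟩ := exists_finset_closedBall_subset (0 : V) 1 one_half_pos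
  refine ⟨_, _, ballCoveringBound_of_halving (K := max t₀.card 1) le_sup_right fun x ρ hρ => ?_⟩
  refine ⟨t₀.image fun y => x + ρ • y, Finset.card_image_le.trans le_sup_left, ?_⟩
  rw [Finset.set_biUnion_finset_image, ← mul_one_div]
  exact closedBall_subset_homothety ht₀ x hρ

end NormedSpace

def assouadSpectrumExponents (θ : ℝ) (F : Set X) : Set ℝ :=
  {s : ℝ | 0 ≤ s ∧ ∃ C > (0 : ℝ), ∀ R : ℝ, 0 < R → R < 1 → ∀ x ∈ F,
    (coveringNumber (R ^ (1 / θ)) (closedBall x R ∩ F) : ℝ≥0∞)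
      ≤ ENNReal.ofReal (C * (R / R ^ (1 / θ)) ^ s)}

def assouadExponents (F : Set X) : Set ℝ :=
  {s : ℝ | 0 ≤ s ∧ ∃ C > (0 : ℝ), ∃ ρ > (0 : ℝ), ∀ r R : ℝ, 0 < r → r < R → R < ρ →
    ∀ x ∈ F, (coveringNumber r (closedBall x R ∩ F) : ℝ≥0∞) ≤ ENNReal.ofReal (C * (R / r) ^ s)}

theorem assouadSpectrum_eq_sInf (θ : ℝ) (F : Set X) :
    assouadSpectrum θ F = sInf (assouadSpectrumExponents θ F) := rfl

theorem assouadDim_eq_sInf (F : Set X) : assouadDim F = sInf (assouadExponents F) := rfl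

theorem assouadSpectrum_nonneg (θ : ℝ) (F : Set X) : 0 ≤ assouadSpectrum θ F :=
  Real.sInf_nonneg fun _ hs => hs.1

theorem assouadSpectrum_le_of_mem {θ s : ℝ} {F : Set X} (hs : s ∈ assouadSpectrumExponents θ F) :
    assouadSpectrum θ F ≤ s :=
  csInf_le ⟨0, fun _ hs => hs.1⟩ hs

theorem rpow_one_div_lt_self {R θ : ℝ} (hR : 0 < R) (hR1 : R < 1) (hθ0 : 0 < θ) (hθ1 : θ < 1) :
    R ^ (1 / θ) < R := by
  simpa using Real.rpow_lt_rpow_of_exponent_gt hR hR1 ((one_lt_div hθ0).mpr hθ1)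

theorem mem_assouadSpectrumExponents_of_forall_lt_one {θ s C₀ : ℝ} {F : Set X}
    (hθ0 : 0 < θ) (hθ1 : θ < 1) (hs : 0 ≤ s) (hC₀ : 0 < C₀)
    (hbound : ∀ r R : ℝ, 0 < r → r < R → R < 1 → ∀ x ∈ F,
      (coveringNumber r (closedBall x R ∩ F) : ℝ≥0∞) ≤ ENNReal.ofReal (C₀ * (R / r) ^ s)) :
    s ∈ assouadSpectrumExponents θ F :=
  ⟨hs, C₀, hC₀, fun R hR hR1 x hx =>
    hbound _ R (by positivity) (rpow_one_div_lt_self hR hR1 hθ0 hθ1) hR1 x hx⟩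

namespace BallCoveringBound

variable {C D : ℝ}

theorem coveringNumber_closedBall_inter_le (hX : BallCoveringBound X C D) {r R : ℝ} (hr : 0 < r)
    (hrR : r ≤ R) (x : X) (F : Set X) :
    (coveringNumber r (closedBall x R ∩ F) : ℝ≥0∞) ≤ ENNReal.ofReal (C * (R / r) ^ D) :=
  (ENat.toENNReal_le.mpr (coveringNumber_mono inter_subset_left)).trans
    (hX.coveringNumber_closedBall_le x r R hr hrR)

/-- For `ρ ≤ R < 1`, cover `B(x, R)` by boundedly many balls of radius `ρ / 4` and use the bound
at scale `ρ / 2` around points of `F`. -/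
theorem exists_forall_lt_one_of_forall_lt (hX : BallCoveringBound X C D) {F : Set X}
    {s C₀ ρ : ℝ} (hs : 0 ≤ s) (hρ : 0 < ρ)
    (hA : ∀ r R : ℝ, 0 < r → r < R → R < ρ → ∀ x ∈ F,
      (coveringNumber r (closedBall x R ∩ F) : ℝ≥0∞) ≤ ENNReal.ofReal (C₀ * (R / r) ^ s)) :
    ∃ C' > (0 : ℝ), ∀ r R : ℝ, 0 < r → r < R → R < 1 → ∀ x ∈ F,
      (coveringNumber r (closedBall x R ∩ F) : ℝ≥0∞) ≤ ENNReal.ofReal (C' * (R / r) ^ s) := by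
  set C₁ := max C₀ 1
  have hC₁ : 1 ≤ C₁ := le_max_right _ _
  have hC := hX.const_pos
  refine ⟨max C₁ (C * (4 / ρ) ^ D * C₁), lt_max_of_lt_left (by positivity),
    fun r R hr hrR hR1 x hx => ?_⟩
  have hR : 0 < R := hr.trans hrR
  have hRr : 1 ≤ (R / r) ^ s := Real.one_le_rpow ((one_le_div hr).mpr hrR.le) hs
  rcases lt_or_ge R ρ with hRρ | hρR
  · refine (hA r R hr hrR hRρ x hx).trans (ENNReal.ofReal_le_ofReal ?_)
    gcongr
    exact (le_max_left _ _).trans (le_max_left _ _)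
  have hpiece : ∀ z ∈ F, (coveringNumber r (closedBall z (2 * (ρ / 4)) ∩ F) : ℝ≥0∞)
      ≤ ENNReal.ofReal (C₁ * (R / r) ^ s) := by
    intro z hz
    rw [show 2 * (ρ / 4) = ρ / 2 by ring]
    rcases lt_or_ge r (ρ / 2) with hrρ | hρr
    · refine (hA r (ρ / 2) hr hrρ (by linarith) z hz).trans (ENNReal.ofReal_le_ofReal ?_)
      gcongr
      · exact le_max_left _ _
      · linarith
    · refine (coe_coveringNumber_le_ofReal_one_of_subset
        (inter_subset_left.trans (closedBall_subset_closedBall hρr))).trans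
        (ENNReal.ofReal_le_ofReal ?_)
      nlinarith
  have hball : (coveringNumber (ρ / 4) (closedBall x R) : ℝ≥0∞)
      ≤ ENNReal.ofReal (C * (4 / ρ) ^ D) := by
    refine (hX.coveringNumber_closedBall_le x _ R (by positivity) (by linarith)).trans
      (ENNReal.ofReal_le_ofReal ?_)
    have h4 : R / (ρ / 4) ≤ 4 / ρ := by
      rw [div_div_eq_mul_div, mul_comm]
      gcongr
      linarith
    exact mul_le_mul_of_nonneg_left (Real.rpow_le_rpow (by positivity) h4 hX.exponent_nonneg) hC.le
  refine (coveringNumber_inter_le_mul (by positivity) (by positivity) hball hpiece).trans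
    (ENNReal.ofReal_le_ofReal ?_)
  rw [← mul_assoc]
  gcongr
  exact le_max_right _ _

theorem mem_assouadExponents (hX : BallCoveringBound X C D) (F : Set X) :
    D ∈ assouadExponents F :=
  ⟨hX.exponent_nonneg, C, hX.const_pos, 1, one_pos,
    fun _ _ hr hrR _ x _ => hX.coveringNumber_closedBall_inter_le hr hrR.le x F⟩

theorem mem_assouadSpectrumExponents (hX : BallCoveringBound X C D) {F : Set X} {s θ : ℝ}
    (hs : s ∈ assouadExponents F) (hθ0 : 0 < θ) (hθ1 : θ < 1) :
    s ∈ assouadSpectrumExponents θ F := by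
  obtain ⟨hs0, C₀, -, ρ, hρ, hA⟩ := hs
  obtain ⟨C', hC', hbound⟩ := hX.exists_forall_lt_one_of_forall_lt hs0 hρ hA
  exact mem_assouadSpectrumExponents_of_forall_lt_one hθ0 hθ1 hs0 hC' hbound

theorem eventually_assouadSpectrum_le (hX : BallCoveringBound X C D) {F : Set X} {s : ℝ}
    (hs : s ∈ assouadExponents F) : ∀ᶠ θ in 𝓝[>] (0 : ℝ), assouadSpectrum θ F ≤ s := by
  filter_upwards [Ioo_mem_nhdsGT one_pos] with θ hθ
  exact assouadSpectrum_le_of_mem (hX.mem_assouadSpectrumExponents hs hθ.1 hθ.2)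

theorem isBoundedUnder_assouadSpectrum (hX : BallCoveringBound X C D) (F : Set X) :
    IsBoundedUnder (· ≤ ·) (𝓝[>] (0 : ℝ)) (assouadSpectrum · F) :=
  isBoundedUnder_of_eventually_le (hX.eventually_assouadSpectrum_le (hX.mem_assouadExponents F))

theorem genUpperBoxDim_le_assouadDim (hX : BallCoveringBound X C D) (F : Set X) :
    genUpperBoxDim F ≤ assouadDim F := by
  rw [assouadDim_eq_sInf]
  refine le_csInf ⟨D, hX.mem_assouadExponents F⟩ fun s hs => ?_
  exact limsup_le_of_le (isCoboundedUnder_le_of_le _ (assouadSpectrum_nonneg · F))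
    (hX.eventually_assouadSpectrum_le hs)

/-- With `R = ε ^ θ`: `B(x₀, M)` needs `≲ ε ^ (-θ D)` balls of radius `R / 2`, and each of them
meets `F` inside some `B(z, R)` with `z ∈ F`, which needs `≲ ε ^ (-s)` balls of radius `ε`. -/
theorem exists_forall_coveringNumber_closedBall_inter_le (hX : BallCoveringBound X C D)
    {F : Set X} {θ s : ℝ} (hθ : 0 < θ) (hs : s ∈ assouadSpectrumExponents θ F) (x₀ : X)
    {M : ℝ} (hM : 1 ≤ M) :
    ∃ A ≥ (0 : ℝ), ∀ ε : ℝ, 0 < ε → ε < 1 → (coveringNumber ε (closedBall x₀ M ∩ F) : ℝ≥0∞)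
      ≤ ENNReal.ofReal (A * ε ^ (-(θ * D + s))) := by
  obtain ⟨hs0, C₀, hC₀, hS⟩ := hs
  have hC := hX.const_pos
  refine ⟨C * (2 * M) ^ D * C₀, by positivity, fun ε hε hε1 => ?_⟩
  set R := ε ^ θ
  have hR : 0 < R := by positivity
  have hR1 : R < 1 := Real.rpow_lt_one hε.le hε1 hθ
  have hRε : R ^ (1 / θ) = ε := by
    rw [← Real.rpow_mul hε.le, mul_one_div_cancel hθ.ne', Real.rpow_one]
  have hball : (coveringNumber (R / 2) (closedBall x₀ M) : ℝ≥0∞)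
      ≤ ENNReal.ofReal (C * (2 * M) ^ D * ε ^ (-(θ * D))) := by
    refine (hX.coveringNumber_closedBall_le x₀ _ M (by positivity) (by linarith)).trans
      (le_of_eq (congrArg ENNReal.ofReal ?_))
    rw [div_div_eq_mul_div, mul_comm M, Real.div_rpow (by positivity) hR.le,
      ← Real.rpow_mul hε.le, div_eq_mul_inv, ← Real.rpow_neg hε.le, neg_mul_eq_neg_mul, mul_assoc]
  have hpiece : ∀ z ∈ F, (coveringNumber ε (closedBall z (2 * (R / 2)) ∩ F) : ℝ≥0∞)
      ≤ ENNReal.ofReal (C₀ * ε ^ (-s)) := by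
    intro z hz
    rw [mul_div_cancel₀ R two_ne_zero]
    refine (hRε ▸ hS R hR hR1 z hz).trans (ENNReal.ofReal_le_ofReal ?_)
    rw [Real.rpow_neg hε.le, ← Real.inv_rpow hε.le, ← one_div]
    gcongr
  refine (coveringNumber_inter_le_mul (by positivity) (by positivity) hball hpiece).trans
    (le_of_eq (congrArg ENNReal.ofReal ?_))
  rw [neg_add, Real.rpow_add hε]
  ring

theorem packingDim_le_of_mem_assouadSpectrumExponents [Nonempty X] (hX : BallCoveringBound X C D)
    {F : Set X} {θ s : ℝ} (hθ : 0 < θ) (hs : s ∈ assouadSpectrumExponents θ F) :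
    packingDim F ≤ θ * D + s := by
  obtain ⟨x₀⟩ := ‹Nonempty X›
  have hnonneg : 0 ≤ θ * D + s := by
    have := hX.exponent_nonneg; have := hs.1; positivity
  refine le_of_forall_gt_imp_ge_of_dense fun s' hs' => ?_
  refine packingDim_le_of_packingMeasure_eq_zero (hnonneg.trans hs'.le) ?_
  refine packingMeasure_eq_zero_of_subset_iUnion (fun n : ℕ => closedBall x₀ (n + 1) ∩ F)
    (fun x hx => mem_iUnion.mpr ?_) fun n => ?_
  · obtain ⟨n, hn⟩ := exists_nat_ge (dist x x₀)
    exact ⟨n, mem_closedBall.mpr (by linarith), hx⟩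
  · obtain ⟨A, hA, hbox⟩ := hX.exists_forall_coveringNumber_closedBall_inter_le hθ hs x₀
      (M := n + 1) (by simp)
    exact packingPre₀_eq_zero_of_forall_coveringNumber_le hA (hnonneg.trans hs'.le) hs' hbox

theorem packingDim_le_assouadSpectrum_add [Nonempty X] (hX : BallCoveringBound X C D)
    (F : Set X) {θ : ℝ} (hθ0 : 0 < θ) (hθ1 : θ < 1) :
    packingDim F ≤ assouadSpectrum θ F + θ * D := by
  refine le_of_forall_gt_imp_ge_of_dense fun u hu => ?_
  have hlt : sInf (assouadSpectrumExponents θ F) < u - θ * D := by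
    rw [← assouadSpectrum_eq_sInf]; linarith
  obtain ⟨s, hs, hsu⟩ := exists_lt_of_csInf_lt
    ⟨D, hX.mem_assouadSpectrumExponents (hX.mem_assouadExponents F) hθ0 hθ1⟩ hlt
  linarith [hX.packingDim_le_of_mem_assouadSpectrumExponents hθ0 hs]

theorem packingDim_le_genUpperBoxDim [Nonempty X] (hX : BallCoveringBound X C D) (F : Set X) :
    packingDim F ≤ genUpperBoxDim F := by
  refine le_of_forall_pos_le_add fun ε hε => ?_
  have hD := hX.exponent_nonneg
  have hev : ∀ᶠ θ in 𝓝[>] (0 : ℝ), packingDim F - ε ≤ assouadSpectrum θ F := by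
    filter_upwards [Ioo_mem_nhdsGT (lt_min one_pos (by positivity : 0 < ε / (D + 1)))]
      with θ ⟨hθ0, hθ⟩
    have hθD : θ * D < ε := by
      have := (lt_div_iff₀ (by positivity)).mp (hθ.trans_le (min_le_right _ _))
      nlinarith
    linarith [hX.packingDim_le_assouadSpectrum_add F hθ0 (hθ.trans_le (min_le_left _ _))]
  have h : packingDim F - ε ≤ genUpperBoxDim F :=
    le_limsup_of_frequently_le hev.frequently (hX.isBoundedUnder_assouadSpectrum F)
  linarith

end BallCoveringBound

/-- For every `F ⊆ ℝ^d`, `dim_P F ≤ \overline{dim}_{GB} F ≤ dim_A F`. -/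
theorem packingDim_le_genUpperBoxDim_le_assouadDim
    (d : ℕ) (F : Set (EuclideanSpace ℝ (Fin d))) :
    packingDim F ≤ genUpperBoxDim F ∧ genUpperBoxDim F ≤ assouadDim F := by
  obtain ⟨C, D, hX⟩ := exists_ballCoveringBound (V := EuclideanSpace ℝ (Fin d))
  exact ⟨hX.packingDim_le_genUpperBoxDim F, hX.genUpperBoxDim_le_assouadDim F⟩
end
end

section
/- Full-dimension equivalence of the spectra: for every set F ⊆ ℝ^d and every θ ∈ (0,1), the upper spectrum satisfies \overline{dim}_A^θ F = d if and only if the Assouad spectrum satisfies dim_A^θ F = d. -/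
/-!
Always `dim_A^θ F ≤ \overline{dim}_A^θ F ≤ d`. Conversely, given `r ≤ R^{1/θ}`, cover
`B(x, R) ∩ F` by `≲ (R/ρ)^d` balls of the intermediate radius `ρ = r^θ`, which only uses that the
ambient space is `d`-dimensional, and each of these by `≲ (ρ/r)^s` balls of radius `ρ^{1/θ} = r`,
where `s` is an exponent admissible for `dim_A^θ F`. As `R ≤ 1`, this costs at most
`(R/r)^{θ d + (1 - θ) s}`, so `\overline{dim}_A^θ F ≤ θ d + (1 - θ) dim_A^θ F`, which is `< d`
whenever `dim_A^θ F < d`.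
-/

open Filter Metric Set Topology Bornology ENNReal

noncomputable section

variable {X : Type*} [PseudoMetricSpace X]

section CoveringNumber

variable {r ρ : ℝ} {A B : Set X}

lemma coveringNumber_le_card {t : Finset X} (h : A ⊆ ⋃ x ∈ t, closedBall x r) :
    coveringNumber r A ≤ t.card :=
  sInf_le ⟨t, h, rfl⟩

lemma coveringNumber_mono_s14 (h : A ⊆ B) : coveringNumber r A ≤ coveringNumber r B :=
  sInf_le_sInf fun _ ⟨t, ht, hn⟩ => ⟨t, h.trans ht, hn⟩

@[simp]
lemma coveringNumber_empty : coveringNumber r (∅ : Set X) = 0 :=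
  nonpos_iff_eq_zero.1 <| by simpa using coveringNumber_le_card (t := ∅) (empty_subset _)

lemma exists_finset_card_eq_coveringNumber (h : coveringNumber r A ≠ ⊤) :
    ∃ t : Finset X, A ⊆ ⋃ x ∈ t, closedBall x r ∧ (t.card : ℕ∞) = coveringNumber r A := by
  unfold _root_.coveringNumber at h ⊢
  set S := {n : ℕ∞ | ∃ t : Finset X, A ⊆ ⋃ x ∈ t, closedBall x r ∧ (t.card : ℕ∞) = n}
  exact csInf_mem (s := S) (nonempty_iff_ne_empty.2 fun he => h (by rw [he, sInf_empty]))

lemma coveringNumber_biUnion_le {ι : Type*} (s : Finset ι) (A : ι → Set X) :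
    coveringNumber r (⋃ i ∈ s, A i) ≤ ∑ i ∈ s, coveringNumber r (A i) := by
  classical
  by_cases hfin : ∀ i ∈ s, coveringNumber r (A i) ≠ ⊤
  · choose t ht hcard using fun i (hi : i ∈ s) => exists_finset_card_eq_coveringNumber (hfin i hi)
    let T : Finset X := s.attach.biUnion fun i => t i i.2
    have hcover : ⋃ i ∈ s, A i ⊆ ⋃ x ∈ T, closedBall x r := by
      simp only [iUnion₂_subset_iff]
      intro i hi y hy
      obtain ⟨x, hx, hyx⟩ := mem_iUnion₂.1 (ht i hi hy)
      exact mem_iUnion₂.2 ⟨x, Finset.mem_biUnion.2 ⟨⟨i, hi⟩, Finset.mem_attach _ _, hx⟩, hyx⟩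
    calc coveringNumber r (⋃ i ∈ s, A i) ≤ T.card := coveringNumber_le_card hcover
      _ ≤ ∑ i ∈ s.attach, ((t i i.2).card : ℕ∞) := by exact_mod_cast Finset.card_biUnion_le
      _ = ∑ i ∈ s, coveringNumber r (A i) := by
        rw [← Finset.sum_attach s]
        exact Finset.sum_congr rfl fun i _ => hcard i i.2
  · push Not at hfin
    simp [ENat.sum_eq_top.2 hfin]

lemma coveringNumber_le_mul {a : ℝ} {b : ℝ≥0∞}
    (hA : (coveringNumber ρ A : ℝ≥0∞) ≤ ENNReal.ofReal a)
    (hloc : ∀ z, (coveringNumber r (closedBall z ρ ∩ A) : ℝ≥0∞) ≤ b) :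
    (coveringNumber r A : ℝ≥0∞) ≤ ENNReal.ofReal a * b := by
  have hfin : coveringNumber ρ A ≠ ⊤ := by
    rw [← ENat.toENNReal_ne_top]; exact (hA.trans_lt ENNReal.ofReal_lt_top).ne
  obtain ⟨t, ht, hcard⟩ := exists_finset_card_eq_coveringNumber hfin
  have hA_sub : A ⊆ ⋃ z ∈ t, closedBall z ρ ∩ A := fun y hy => by
    obtain ⟨z, hz, hyz⟩ := mem_iUnion₂.1 (ht hy)
    exact mem_iUnion₂.2 ⟨z, hz, hyz, hy⟩
  calc (coveringNumber r A : ℝ≥0∞)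
      ≤ ((∑ z ∈ t, coveringNumber r (closedBall z ρ ∩ A) : ℕ∞) : ℝ≥0∞) :=
        ENat.toENNReal_le.2 ((coveringNumber_mono_s14 hA_sub).trans (coveringNumber_biUnion_le _ _))
    _ = ∑ z ∈ t, (coveringNumber r (closedBall z ρ ∩ A) : ℝ≥0∞) :=
        map_sum ENat.toENNRealRingHom _ _
    _ ≤ t.card * b := by simpa using Finset.sum_le_sum fun z (_ : z ∈ t) => hloc z
    _ ≤ ENNReal.ofReal a * b := by
        gcongr
        rw [← ENat.toENNReal_coe, hcard]; exact hA

lemma coveringNumber_closedBall_inter_le {F : Set X} {b : ℝ≥0∞}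
    (h : ∀ y ∈ F, (coveringNumber r (closedBall y (2 * ρ) ∩ F) : ℝ≥0∞) ≤ b) (z : X) :
    (coveringNumber r (closedBall z ρ ∩ F) : ℝ≥0∞) ≤ b := by
  rcases (closedBall z ρ ∩ F).eq_empty_or_nonempty with hempty | ⟨y, hyz, hyF⟩
  · simp [hempty]
  refine le_trans (ENat.toENNReal_le.2 (coveringNumber_mono_s14 ?_)) (h y hyF)
  refine inter_subset_inter_left _ (closedBall_subset_closedBall' ?_)
  linarith [mem_closedBall'.1 hyz, dist_nonneg.trans (mem_closedBall.1 hyz)]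

end CoveringNumber

lemma div_rpow_mul_rpow_le {θ s d r R : ℝ} (hr : 0 < r) (hR : 0 < R) (hR1 : R ≤ 1)
    (hθ1 : θ ≤ 1) (hsd : s ≤ d) :
    (R / r ^ θ) ^ d * (r ^ θ / r) ^ s ≤ (R / r) ^ (θ * d + (1 - θ) * s) := by
  have hrθ : 0 < r ^ θ := Real.rpow_pos_of_pos hr θ
  rw [Real.rpow_def_of_pos (div_pos hR hrθ), Real.rpow_def_of_pos (div_pos hrθ hr),
    Real.rpow_def_of_pos (div_pos hR hr), ← Real.exp_add, Real.exp_le_exp,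
    Real.log_div hR.ne' hrθ.ne', Real.log_div hrθ.ne' hr.ne', Real.log_div hR.ne' hr.ne',
    Real.log_rpow hr]
  have : (1 - θ) * (d - s) * Real.log R ≤ 0 :=
    mul_nonpos_of_nonneg_of_nonpos (mul_nonneg (by linarith) (by linarith))
      (Real.log_nonpos hR.le hR1)
  linarith

section Spectra

variable {θ s : ℝ} {F : Set X}

-- The conditions on the exponent `s` in `assouadSpectrum` and `upperSpectrum`.
def HasAssouadSpectrumBound (θ s : ℝ) (F : Set X) : Prop :=
  ∃ C > (0 : ℝ), ∀ R : ℝ, 0 < R → R < 1 → ∀ x ∈ F,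
    (coveringNumber (R ^ (1 / θ)) (closedBall x R ∩ F) : ℝ≥0∞)
      ≤ ENNReal.ofReal (C * (R / R ^ (1 / θ)) ^ s)

def HasUpperSpectrumBound (θ s : ℝ) (F : Set X) : Prop :=
  ∃ C > (0 : ℝ), ∀ r R : ℝ, 0 < r → r ≤ R ^ (1 / θ) →
    R ^ (1 / θ) < R → R < 1 → 0 < R → ∀ x ∈ F,
    (coveringNumber r (closedBall x R ∩ F) : ℝ≥0∞) ≤ ENNReal.ofReal (C * (R / r) ^ s)

lemma HasUpperSpectrumBound.hasAssouadSpectrumBound (hθ : θ ∈ Ioo 0 1)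
    (h : HasUpperSpectrumBound θ s F) : HasAssouadSpectrumBound θ s F := by
  obtain ⟨C, hC, hbound⟩ := h
  refine ⟨C, hC, fun R hR0 hR1 x hx =>
    hbound _ R (Real.rpow_pos_of_pos hR0 _) le_rfl ?_ hR1 hR0 x hx⟩
  exact Real.rpow_lt_self_of_lt_one hR0 hR1 (one_lt_one_div hθ.1 hθ.2)

lemma upperSpectrum_le (hs : 0 ≤ s) (h : HasUpperSpectrumBound θ s F) : upperSpectrum θ F ≤ s :=
  csInf_le ⟨0, fun _ h => h.1⟩ ⟨hs, h⟩

lemma assouadSpectrum_le_upperSpectrum (hθ : θ ∈ Ioo 0 1) (hs : 0 ≤ s)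
    (h : HasUpperSpectrumBound θ s F) : assouadSpectrum θ F ≤ upperSpectrum θ F :=
  csInf_le_csInf ⟨0, fun _ h => h.1⟩ ⟨s, hs, h⟩ fun _ h =>
    ⟨h.1, HasUpperSpectrumBound.hasAssouadSpectrumBound hθ h.2⟩

end Spectra

section FiniteDimensional

open Module MeasureTheory

variable {E : Type*} [NormedAddCommGroup E] [NormedSpace ℝ E] [FiniteDimensional ℝ E]

lemma Finset.card_le_of_pairwise_lt_dist {x : E} {r R : ℝ} (hr : 0 < r) (hrR : r ≤ R)
    {D : Finset E} (hD : ↑D ⊆ closedBall x R) (hsep : (D : Set E).Pairwise (r < dist · ·)) :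
    (D.card : ℝ) ≤ (3 * R / r) ^ finrank ℝ E := by
  have hR : 0 < R := hr.trans_le hrR
  borelize E
  let μ : Measure E := Measure.addHaar
  have hdisj : (D : Set E).PairwiseDisjoint fun c => ball c (r / 2) :=
    fun a ha b hb hab => ball_disjoint_ball (by linarith [hsep ha hb hab] : r / 2 + r / 2 ≤ _)
  have hsub : ⋃ c ∈ D, ball c (r / 2) ⊆ ball x (3 * R / 2) :=
    iUnion₂_subset fun c hc => ball_subset_ball' (by linarith [mem_closedBall.1 (hD hc)])
  have hvol : (D.card : ℝ≥0∞) * ENNReal.ofReal ((r / 2) ^ finrank ℝ E) * μ (ball 0 1) ≤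
      ENNReal.ofReal ((3 * R / 2) ^ finrank ℝ E) * μ (ball 0 1) :=
    calc _ = μ (⋃ c ∈ D, ball c (r / 2)) := by
          rw [measure_biUnion_finset hdisj fun c _ => measurableSet_ball]
          simp [μ.addHaar_ball_of_pos _ (half_pos hr), mul_assoc]
      _ ≤ μ (ball x (3 * R / 2)) := measure_mono hsub
      _ = _ := μ.addHaar_ball_of_pos _ (by linarith)
  have hcard := (ENNReal.mul_le_mul_iff_left (measure_ball_pos μ (0 : E) one_pos).ne'
    measure_ball_lt_top.ne).1 hvol
  rw [← ENNReal.ofReal_natCast, ← ENNReal.ofReal_mul (Nat.cast_nonneg _),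
    ENNReal.ofReal_le_ofReal_iff (by positivity)] at hcard
  rwa [show 3 * R / r = (3 * R / 2) / (r / 2) by field_simp, div_pow, le_div_iff₀ (by positivity)]

lemma packingNumber_closedBall_le (x : E) {r R : ℝ} (hr : 0 < r) (hrR : r ≤ R) :
    packingNumber r.toNNReal (closedBall x R) ≤ ⌊(3 * R / r) ^ finrank ℝ E⌋₊ := by
  refine iSup₂_le fun C hC => iSup_le fun hsep => ?_
  by_contra! hlt
  obtain ⟨D, hDC, hD⟩ := exists_subset_encard_eq (Order.add_one_le_of_lt hlt)
  have hDfin : D.Finite := finite_of_encard_eq_coe (by rw [hD]; rfl)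
  have hsepD : (hDfin.toFinset : Set E).Pairwise (r < dist · ·) := by
    rw [Finite.coe_toFinset]
    intro a ha b hb hab
    have := hsep (hDC ha) (hDC hb) hab
    change ENNReal.ofReal r < edist a b at this
    rwa [edist_dist, ENNReal.ofReal_lt_ofReal_iff_of_nonneg hr.le] at this
  have hle := hDfin.toFinset.card_le_of_pairwise_lt_dist hr hrR (by simpa using hDC.trans hC) hsepD
  rw [hDfin.encard_eq_coe_toFinset_card] at hD
  have hcard : hDfin.toFinset.card = ⌊(3 * R / r) ^ finrank ℝ E⌋₊ + 1 := by exact_mod_cast hD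
  rw [hcard, Nat.cast_add_one] at hle
  exact (Nat.lt_floor_add_one _).not_ge hle

lemma coveringNumber_closedBall_le (x : E) {r R : ℝ} (hr : 0 < r) (hrR : r ≤ R) :
    (coveringNumber r (closedBall x R) : ℝ≥0∞) ≤ ENNReal.ofReal ((3 * R / r) ^ finrank ℝ E) := by
  have hpack := packingNumber_closedBall_le x hr hrR
  have hfin : packingNumber r.toNNReal (closedBall x R) ≠ ⊤ := ne_top_of_le_ne_top (by simp) hpack
  set C := maximalSeparatedSet r.toNNReal (closedBall x R)
  have hCfin : C.Finite := encard_ne_top_iff.1 (by rw [encard_maximalSeparatedSet hfin]; exact hfin)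
  have hcover : closedBall x R ⊆ ⋃ y ∈ hCfin.toFinset, closedBall y r := by
    simpa [hr.le] using (isCover_maximalSeparatedSet hfin).subset_iUnion_closedBall
  calc (coveringNumber r (closedBall x R) : ℝ≥0∞) ≤ ((hCfin.toFinset.card : ℕ∞) : ℝ≥0∞) :=
        ENat.toENNReal_le.2 (coveringNumber_le_card hcover)
    _ ≤ ((⌊(3 * R / r) ^ finrank ℝ E⌋₊ : ℕ∞) : ℝ≥0∞) := by
        rw [ENat.toENNReal_le, ← hCfin.encard_eq_coe_toFinset_card, encard_maximalSeparatedSet hfin]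
        exact hpack
    _ ≤ _ := by
        rw [ENat.toENNReal_coe, ← ENNReal.ofReal_natCast]
        have hR : 0 < R := hr.trans_le hrR
        exact ENNReal.ofReal_le_ofReal (Nat.floor_le (by positivity))

variable {θ s : ℝ} {F : Set E}

lemma hasUpperSpectrumBound_finrank (θ : ℝ) (F : Set E) :
    HasUpperSpectrumBound θ (finrank ℝ E) F := by
  refine ⟨3 ^ finrank ℝ E, by positivity, fun r R hr hrR hR1 _ _ x _ => ?_⟩
  refine (ENat.toENNReal_le.2 (coveringNumber_mono_s14 inter_subset_left)).trans ?_
  refine (coveringNumber_closedBall_le x hr (hrR.trans hR1.le)).trans_eq ?_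
  rw [Real.rpow_natCast, mul_div_assoc, mul_pow]

theorem HasAssouadSpectrumBound.hasUpperSpectrumBound (hθ : θ ∈ Ioo 0 1) (hsd : s ≤ finrank ℝ E)
    (h : HasAssouadSpectrumBound θ s F) :
    HasUpperSpectrumBound θ (θ * finrank ℝ E + (1 - θ) * s) F := by
  obtain ⟨C, hC, hF⟩ := h
  refine ⟨6 ^ finrank ℝ E * C, by positivity, fun r R hr hrR _ hR1 hR x _ => ?_⟩
  set ρ := r ^ θ
  have hρ : 0 < ρ := Real.rpow_pos_of_pos hr θ
  have hρr : ρ ^ (1 / θ) = r := by rw [one_div]; exact Real.rpow_rpow_inv hr.le hθ.1.ne'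
  have hρR : ρ ≤ R :=
    calc ρ ≤ (R ^ (1 / θ)) ^ θ := Real.rpow_le_rpow hr.le hrR hθ.1.le
      _ = R := by rw [one_div]; exact Real.rpow_inv_rpow hR.le hθ.1.ne'
  have hamb : (coveringNumber (ρ / 2) (closedBall x R ∩ F) : ℝ≥0∞) ≤
      ENNReal.ofReal ((3 * R / (ρ / 2)) ^ finrank ℝ E) :=
    (ENat.toENNReal_le.2 (coveringNumber_mono_s14 inter_subset_left)).trans
      (coveringNumber_closedBall_le x (half_pos hρ) (by linarith))
  have hloc : ∀ z, (coveringNumber r (closedBall z (ρ / 2) ∩ (closedBall x R ∩ F)) : ℝ≥0∞) ≤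
      ENNReal.ofReal (C * (ρ / r) ^ s) := by
    have hball : ∀ y ∈ F, (coveringNumber r (closedBall y (2 * (ρ / 2)) ∩ F) : ℝ≥0∞) ≤
        ENNReal.ofReal (C * (ρ / r) ^ s) := fun y hy => by
      rw [mul_div_cancel₀ _ two_ne_zero, ← hρr]
      exact hF ρ hρ (hρR.trans_lt hR1) y hy
    exact fun z => (ENat.toENNReal_le.2 (coveringNumber_mono_s14
      (inter_subset_inter_right _ inter_subset_right))).trans
        (coveringNumber_closedBall_inter_le hball z)
  calc _ ≤ ENNReal.ofReal ((3 * R / (ρ / 2)) ^ finrank ℝ E) * ENNReal.ofReal (C * (ρ / r) ^ s) :=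
        coveringNumber_le_mul hamb hloc
    _ = ENNReal.ofReal (6 ^ finrank ℝ E * C * ((R / ρ) ^ (finrank ℝ E : ℝ) * (ρ / r) ^ s)) := by
        rw [← ENNReal.ofReal_mul (by positivity), Real.rpow_natCast]
        congr 1
        rw [show 3 * R / (ρ / 2) = 6 * (R / ρ) by ring, mul_pow]
        ring
    _ ≤ _ := ENNReal.ofReal_le_ofReal <| mul_le_mul_of_nonneg_left
        (div_rpow_mul_rpow_le hr hR hR1.le hθ.2.le hsd) (by positivity)

lemma upperSpectrum_le_finrank (θ : ℝ) (F : Set E) : upperSpectrum θ F ≤ finrank ℝ E :=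
  upperSpectrum_le (Nat.cast_nonneg _) (hasUpperSpectrumBound_finrank θ F)

theorem upperSpectrum_le_mul_finrank_add_mul_assouadSpectrum (hθ : θ ∈ Ioo 0 1) (F : Set E) :
    upperSpectrum θ F ≤ θ * finrank ℝ E + (1 - θ) * assouadSpectrum θ F := by
  by_contra! hlt
  have h1θ : 0 < 1 - θ := sub_pos.2 hθ.2
  have hne : {s | 0 ≤ s ∧ HasAssouadSpectrumBound θ s F}.Nonempty :=
    ⟨_, Nat.cast_nonneg _, (hasUpperSpectrumBound_finrank θ F).hasAssouadSpectrumBound hθ⟩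
  obtain ⟨s, ⟨hs0, hs⟩, hslt⟩ := exists_lt_of_csInf_lt hne
    (show assouadSpectrum θ F < (upperSpectrum θ F - θ * finrank ℝ E) / (1 - θ) by
      rw [lt_div_iff₀ h1θ]; linarith)
  rw [lt_div_iff₀ h1θ] at hslt
  rcases le_total s (finrank ℝ E) with hsd | hds
  · have := upperSpectrum_le (by nlinarith [hθ.1]) (hs.hasUpperSpectrumBound hθ hsd)
    linarith
  · have := upperSpectrum_le_finrank θ F
    nlinarith

end FiniteDimensional

/-- Full-dimension equivalence of the spectra: `\overline{dim}_A^θ F = d ↔ dim_A^θ F = d`. -/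
theorem upperSpectrum_eq_dim_iff_assouadSpectrum_eq_dim
    (d : ℕ) (θ : ℝ) (hθ : θ ∈ Set.Ioo (0 : ℝ) 1) (F : Set (EuclideanSpace ℝ (Fin d))) :
    upperSpectrum θ F = d ↔ assouadSpectrum θ F = d := by
  have hA := assouadSpectrum_le_upperSpectrum hθ (Nat.cast_nonneg _)
    (hasUpperSpectrumBound_finrank θ F)
  have hU := upperSpectrum_le_finrank θ F
  have hUA := upperSpectrum_le_mul_finrank_add_mul_assouadSpectrum hθ F
  rw [finrank_euclideanSpace_fin] at hU hUA
  have h1θ : 0 < 1 - θ := sub_pos.2 hθ.2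
  constructor
  · intro h
    refine le_antisymm (hA.trans h.le) (le_of_mul_le_mul_left ?_ h1θ)
    linarith
  · intro h
    linarith
end
end
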